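/- arXiv:2409.17551 — 2 statements merged into one kernel-verified Lean document; each statement's English description precedes it below -/
import Mathlib

section
/- Let k be a field, let R and S be polynomial rings over k in at least one variable each, with graded maximal ideals m and n, let I ⊆ m² and J ⊆ n² be proper homogeneous ideals, let T = R ⊗_k S, and let F = I + J + mn ⊆ T. If depth(R/I) ≥ 1 and depth(S/J) ≥ 1, then for every integer s ≥ 1 one has F^{(s)} = (I + n)^{(s)} ∩ (J + m)^{(s)}. -/
/- STATEMENT 10: k a field, R and S polynomial rings over k in at least one variable each
with graded maximal ideals m and n, I ⊆ m² and J ⊆ n² proper homogeneous ideals,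
T = R ⊗_k S, F = I + J + mn. If depth(R/I) ≥ 1 and depth(S/J) ≥ 1 (equivalently the
graded maximal ideals are non-associated), then for every s ≥ 1:
F^{(s)} = (I + n)^{(s)} ∩ (J + m)^{(s)}. -/

open MvPolynomial

noncomputable section

/-- The graded maximal ideal of a polynomial ring, generated by the variables. -/
def mxI (k : Type*) [Field k] (σ : Type*) : Ideal (MvPolynomial σ k) :=
  Ideal.span (Set.range MvPolynomial.X)

/-- An ideal of a polynomial ring is homogeneous if it contains every homogeneous
component of each of its elements. -/
def IsHomogIdeal {k : Type*} [Field k] {σ : Type*} (I : Ideal (MvPolynomial σ k)) : Prop :=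
  ∀ f ∈ I, ∀ d : ℕ, MvPolynomial.homogeneousComponent d f ∈ I

/-- The `s`-th symbolic power of an ideal `a`: the intersection over all associated primes `P`
of `A ⧸ a` of the contraction of `a ^ s` extended to the localization at `P`. -/
def symbPow {A : Type*} [CommRing A] (a : Ideal A) (s : ℕ) : Ideal A :=
  sInf { J : Ideal A | ∃ (P : Ideal A) (hP : P ∈ associatedPrimes A (A ⧸ a)),
      haveI : P.IsPrime := IsAssociatedPrime.isPrime hP
      J = (Ideal.map (algebraMap A (Localization.AtPrime P)) (a ^ s)).comap
            (algebraMap A (Localization.AtPrime P)) }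


/-! With `P = I + n` and `Q = J + m` one has `F = P ∩ Q`, because `I ⊆ m`, `J ⊆ n` and
`m ∩ n = mn`, while `P + Q` is the graded maximal ideal `M` of `T`. Since `T/P ≅ R/I` and
`T/Q ≅ S/J`, the depth hypotheses say that `M` is associated to neither `T/P` nor `T/Q`. So every
associated prime `p` of `T/P` misses some `q ∈ Q`: then `p` is also associated to `T/(P ∩ Q)`
(witnessed by `q` times a witness for `T/P`), and `Q` becomes the unit ideal at `p`, so
`(P ∩ Q)^s` and `P^s` have the same localization there. As `Ass(T/(P ∩ Q))` lies in
`Ass(T/P) ∪ Ass(T/Q)`, the local components of both sides coincide. -/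

section AssociatedPrimes

variable {A : Type*} [CommRing A]

theorem colon_bot_quotient_mk (K : Ideal A) (a : A) :
    (⊥ : Submodule A (A ⧸ K)).colon {Submodule.Quotient.mk a} = K.colon {a} := by
  ext c
  rw [Submodule.mem_colon_singleton, Submodule.mem_colon_singleton, Submodule.mem_bot,
    ← Submodule.Quotient.mk_smul, Submodule.Quotient.mk_eq_zero]

theorem le_of_mem_associatedPrimes_quotient {K p : Ideal A}
    (hp : p ∈ associatedPrimes A (A ⧸ K)) : K ≤ p := by
  simpa [Submodule.annihilator_top, Ideal.annihilator_quotient] using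
    IsAssociatedPrime.annihilator_le hp

theorem associatedPrimes_quotient_inf_subset (P Q : Ideal A) :
    associatedPrimes A (A ⧸ (P ⊓ Q)) ⊆
      associatedPrimes A (A ⧸ P) ∪ associatedPrimes A (A ⧸ Q) := by
  rw [← associatedPrimes.prod]
  refine associatedPrimes.subset_of_injective
    (f := (Submodule.factor inf_le_left).prod (Submodule.factor inf_le_right)) ?_
  intro x y h
  obtain ⟨a, rfl⟩ := Submodule.Quotient.mk_surjective _ x
  obtain ⟨b, rfl⟩ := Submodule.Quotient.mk_surjective _ y
  simpa [Prod.ext_iff, Ideal.Quotient.eq] using h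

theorem mem_associatedPrimes_quotient_inf_of_not_le {P Q p : Ideal A}
    (hp : p ∈ associatedPrimes A (A ⧸ P)) (hQ : ¬ Q ≤ p) :
    p ∈ associatedPrimes A (A ⧸ (P ⊓ Q)) := by
  obtain ⟨hprime, x, hx⟩ := hp
  obtain ⟨a, rfl⟩ := Submodule.Quotient.mk_surjective _ x
  obtain ⟨q, hqQ, hqp⟩ := SetLike.not_le_iff_exists.mp hQ
  refine ⟨hprime, Submodule.Quotient.mk (q * a), ?_⟩
  rw [colon_bot_quotient_mk] at hx ⊢
  have hcolon : ∀ c, c ∈ (P ⊓ Q).colon {q * a} ↔ c * q ∈ P.colon {a} := fun c => by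
    simp only [Submodule.mem_colon_singleton, smul_eq_mul, Submodule.mem_inf, ← mul_assoc]
    exact and_iff_left (Q.mul_mem_right _ (Q.mul_mem_left _ hqQ))
  refine le_antisymm ?_ ?_
  · rw [hx]
    exact Ideal.radical_mono fun c hc => (hcolon c).2 (Ideal.mul_mem_right _ _ hc)
  · rw [← hprime.radical]
    refine Ideal.radical_mono fun c hc => ?_
    have := Ideal.le_radical ((hcolon c).1 hc)
    rw [← hx] at this
    exact (hprime.mem_or_mem this).resolve_right hqp

theorem map_mem_associatedPrimes_of_surjective {B F : Type*} [CommRing B] [FunLike F A B]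
    [RingHomClass F A B] {f : F} (hf : Function.Surjective f) {K : Ideal B} {p : Ideal A}
    (hp : p ∈ associatedPrimes A (A ⧸ K.comap f)) :
    p.map f ∈ associatedPrimes B (B ⧸ K) := by
  obtain ⟨hprime, x, hx⟩ := hp
  obtain ⟨a, rfl⟩ := Submodule.Quotient.mk_surjective _ x
  have hcolon : (K.comap f).colon {a} = (K.colon {f a}).comap f := by
    ext c
    simp [Submodule.mem_colon_singleton]
  rw [colon_bot_quotient_mk, hcolon, ← Ideal.comap_radical] at hx
  subst hx
  rw [Ideal.map_comap_of_surjective f hf]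
  refine ⟨?_, Submodule.Quotient.mk (f a), by rw [colon_bot_quotient_mk]⟩
  simpa [Ideal.map_comap_of_surjective f hf] using
    Ideal.map_isPrime_of_surjective hf (Ideal.ker_le_comap f)

end AssociatedPrimes

section SymbolicPower

variable {A : Type*} [CommRing A]

theorem map_algebraMap_atPrime_inf_of_not_le (p : Ideal A) [p.IsPrime] {P Q : Ideal A}
    (hQ : ¬ Q ≤ p) :
    (P ⊓ Q).map (algebraMap A (Localization.AtPrime p)) =
      P.map (algebraMap A (Localization.AtPrime p)) := by
  have hQtop : Q.map (algebraMap A (Localization.AtPrime p)) = ⊤ := by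
    by_contra h
    rw [← ne_eq, IsLocalization.map_algebraMap_ne_top_iff_disjoint p.primeCompl] at h
    exact hQ fun q hq => by_contra fun hqp => Set.disjoint_left.mp h hqp hq
  rw [IsLocalization.map_inf p.primeCompl, hQtop, inf_top_eq]

theorem not_le_of_mem_associatedPrimes_quotient {P Q p : Ideal A} (hmax : (P ⊔ Q).IsMaximal)
    (hP : P ⊔ Q ∉ associatedPrimes A (A ⧸ P)) (hp : p ∈ associatedPrimes A (A ⧸ P)) :
    ¬ Q ≤ p := fun hQ => by
  have : P ⊔ Q = p :=
    hmax.eq_of_le hp.isPrime.ne_top (sup_le (le_of_mem_associatedPrimes_quotient hp) hQ)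
  exact hP (this ▸ hp)

theorem symbPow_inf_le_left {P Q : Ideal A} (hmax : (P ⊔ Q).IsMaximal)
    (hP : P ⊔ Q ∉ associatedPrimes A (A ⧸ P)) (s : ℕ) :
    symbPow (P ⊓ Q) s ≤ symbPow P s := by
  refine le_sInf ?_
  rintro _ ⟨p, hp, rfl⟩
  have := hp.isPrime
  have hQp := not_le_of_mem_associatedPrimes_quotient hmax hP hp
  refine sInf_le ⟨p, mem_associatedPrimes_quotient_inf_of_not_le hp hQp, ?_⟩
  rw [Ideal.map_pow, Ideal.map_pow, map_algebraMap_atPrime_inf_of_not_le p hQp]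

theorem inf_symbPow_le_symbPow_inf {P Q : Ideal A} (hmax : (P ⊔ Q).IsMaximal)
    (hP : P ⊔ Q ∉ associatedPrimes A (A ⧸ P)) (hQ : P ⊔ Q ∉ associatedPrimes A (A ⧸ Q))
    (s : ℕ) : symbPow P s ⊓ symbPow Q s ≤ symbPow (P ⊓ Q) s := by
  refine le_sInf ?_
  rintro _ ⟨p, hp, rfl⟩
  have := hp.isPrime
  rcases associatedPrimes_quotient_inf_subset P Q hp with hpP | hpQ
  · have hQp := not_le_of_mem_associatedPrimes_quotient hmax hP hpP
    refine inf_le_left.trans (sInf_le ⟨p, hpP, ?_⟩)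
    rw [Ideal.map_pow, Ideal.map_pow, map_algebraMap_atPrime_inf_of_not_le p hQp]
  · rw [sup_comm] at hmax hQ
    have hPp := not_le_of_mem_associatedPrimes_quotient hmax hQ hpQ
    refine inf_le_right.trans (sInf_le ⟨p, hpQ, ?_⟩)
    simp only [Ideal.map_pow, inf_comm P Q, map_algebraMap_atPrime_inf_of_not_le p hPp]

theorem symbPow_inf_eq_inf_symbPow {P Q : Ideal A} (hmax : (P ⊔ Q).IsMaximal)
    (hP : P ⊔ Q ∉ associatedPrimes A (A ⧸ P)) (hQ : P ⊔ Q ∉ associatedPrimes A (A ⧸ Q))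
    (s : ℕ) : symbPow (P ⊓ Q) s = symbPow P s ⊓ symbPow Q s := by
  refine le_antisymm (le_inf (symbPow_inf_le_left hmax hP s) ?_)
    (inf_symbPow_le_symbPow_inf hmax hP hQ s)
  rw [inf_comm]
  exact symbPow_inf_le_left (sup_comm P Q ▸ hmax) (sup_comm P Q ▸ hQ) s

end SymbolicPower

namespace MvPolynomial

variable {R σ ρ : Type*} [CommSemiring R] {f : σ → ρ} (hf : Function.Injective f)

theorem killCompl_X (i : σ) : killCompl hf (X (f i) : MvPolynomial ρ R) = X i := by
  simpa using killCompl_rename_app hf (X i : MvPolynomial σ R)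

theorem killCompl_X_eq_zero {r : ρ} (hr : r ∉ Set.range f) :
    killCompl hf (X r : MvPolynomial ρ R) = 0 := by
  simp [killCompl, hr]

end MvPolynomial

theorem sup_inf_sup_eq_of_le {α : Type*} [Lattice α] [IsModularLattice α] {a b c d : α}
    (hac : a ≤ c) (hbd : b ≤ d) : (a ⊔ d) ⊓ (b ⊔ c) = a ⊔ b ⊔ c ⊓ d := by
  rw [inf_comm, sup_inf_assoc_of_le c (hbd.trans le_sup_right), inf_comm,
    sup_inf_assoc_of_le d hac, inf_comm d c, ← sup_assoc, sup_comm b a]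

section Polynomial

variable {k : Type*} [Field k] {σ ρ : Type*}

theorem mxI_eq_ker_constantCoeff :
    mxI k σ = RingHom.ker (constantCoeff : MvPolynomial σ k →+* k) := by
  ext f
  rw [RingHom.mem_ker, ← pow_one (mxI k σ), mxI, mem_pow_idealOfVars_iff']
  simp [Finsupp.degree_eq_zero_iff, constantCoeff_eq]

theorem mxI_isMaximal : (mxI k σ).IsMaximal := by
  rw [mxI_eq_ker_constantCoeff]
  exact RingHom.ker_isMaximal_of_surjective _ fun c => ⟨C c, constantCoeff_C σ c⟩

theorem map_rename_mxI (f : σ → ρ) :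
    (mxI k σ).map (rename f) = Ideal.span (X '' Set.range f) := by
  rw [mxI, Ideal.map_span, ← Set.range_comp, ← Set.range_comp]
  congr 2
  exact funext (rename_X f)

theorem mxI_eq_span_X_sup_span_X_compl (s : Set ρ) :
    mxI k ρ = Ideal.span (X '' s) ⊔ Ideal.span (X '' sᶜ) := by
  rw [mxI, ← Ideal.span_union, ← Set.image_union, Set.union_compl_self, Set.image_univ]

theorem span_X_image_inf_le_mul {s t : Set ρ} (hst : Disjoint s t) :
    Ideal.span (X '' s) ⊓ Ideal.span (X '' t) ≤
      (Ideal.span (X '' s) * Ideal.span (X '' t) : Ideal (MvPolynomial ρ k)) := by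
  classical
  rintro f ⟨hfs, hft⟩
  rw [SetLike.mem_coe, mem_ideal_span_X_image] at hfs hft
  rw [← support_sum_monomial_coeff f]
  refine Ideal.sum_mem _ fun d hd => ?_
  obtain ⟨i, hi, hdi⟩ := hfs d hd
  obtain ⟨j, hj, hdj⟩ := hft d hd
  have hij : i ≠ j := hst.ne_of_mem hi hj
  set e := Finsupp.single i 1 + Finsupp.single j 1
  have hle : e ≤ d := fun x => by
    simp only [e, Finsupp.add_apply, Finsupp.single_apply]
    split_ifs <;> grind
  have hsplit : monomial d (coeff d f) = X i * X j * monomial (d - e) (coeff d f) := by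
    rw [X, X, monomial_mul, monomial_mul, one_mul, one_mul, add_tsub_cancel_of_le hle]
  rw [hsplit]
  exact Ideal.mul_mem_right _ _
    (Ideal.mul_mem_mul (Ideal.subset_span ⟨i, hi, rfl⟩) (Ideal.subset_span ⟨j, hj, rfl⟩))

theorem sub_rename_killCompl_mem {f : σ → ρ} (hf : Function.Injective f)
    (g : MvPolynomial ρ k) :
    g - rename f (killCompl hf g) ∈ Ideal.span (X '' (Set.range f)ᶜ) := by
  induction g using MvPolynomial.induction_on with
  | C c => simp
  | add p q hp hq =>
    rw [map_add, map_add, add_sub_add_comm]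
    exact Ideal.add_mem _ hp hq
  | mul_X p r hp =>
    by_cases hr : r ∈ Set.range f
    · obtain ⟨i, rfl⟩ := hr
      rw [map_mul, map_mul, killCompl_X, rename_X, ← sub_mul]
      exact Ideal.mul_mem_right _ _ hp
    · rw [map_mul, killCompl_X_eq_zero hf hr, mul_zero, map_zero, sub_zero]
      exact Ideal.mul_mem_left _ _ (Ideal.subset_span ⟨r, hr, rfl⟩)

theorem comap_killCompl {f : σ → ρ} (hf : Function.Injective f)
    (K : Ideal (MvPolynomial σ k)) :
    K.comap (killCompl hf) = K.map (rename f) ⊔ Ideal.span (X '' (Set.range f)ᶜ) := by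
  refine le_antisymm (fun g hg => ?_) (sup_le ?_ ?_)
  · rw [← add_sub_cancel (rename f (killCompl hf g)) g]
    exact Ideal.add_mem _ (Ideal.mem_sup_left (Ideal.mem_map_of_mem _ hg))
      (Ideal.mem_sup_right (sub_rename_killCompl_mem hf g))
  · rw [Ideal.map_le_iff_le_comap]
    intro g hg
    rwa [Ideal.mem_comap, Ideal.mem_comap, killCompl_rename_app]
  · rw [Ideal.span_le]
    rintro _ ⟨r, hr, rfl⟩
    rw [SetLike.mem_coe, Ideal.mem_comap, killCompl_X_eq_zero hf hr]
    exact K.zero_mem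

theorem map_killCompl_mxI {f : σ → ρ} (hf : Function.Injective f) :
    (mxI k ρ).map (killCompl hf) = mxI k σ := by
  refine le_antisymm ?_ fun g hg => ?_
  · rw [mxI, Ideal.map_span, Ideal.span_le]
    rintro _ ⟨_, ⟨r, rfl⟩, rfl⟩
    by_cases hr : r ∈ Set.range f
    · obtain ⟨i, rfl⟩ := hr
      rw [killCompl_X]
      exact Ideal.subset_span ⟨i, rfl⟩
    · rw [killCompl_X_eq_zero hf hr]
      exact Ideal.zero_mem _
  · have hle : (mxI k σ).map (rename f) ≤ mxI k ρ := by
      rw [map_rename_mxI, mxI_eq_span_X_sup_span_X_compl (Set.range f)]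
      exact le_sup_left
    rw [← killCompl_rename_app hf g]
    exact Ideal.mem_map_of_mem _ (hle (Ideal.mem_map_of_mem _ hg))

theorem mxI_notMem_associatedPrimes_sup_span_X_compl {f : σ → ρ} (hf : Function.Injective f)
    {K : Ideal (MvPolynomial σ k)}
    (hK : mxI k σ ∉ associatedPrimes _ (MvPolynomial σ k ⧸ K)) :
    mxI k ρ ∉ associatedPrimes _
      (MvPolynomial ρ k ⧸ (K.map (rename f) ⊔ Ideal.span (X '' (Set.range f)ᶜ))) := by
  rw [← comap_killCompl hf]
  intro h
  have := map_mem_associatedPrimes_of_surjective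
    (fun g => ⟨rename f g, killCompl_rename_app hf g⟩) h
  rw [map_killCompl_mxI] at this
  exact hK this

end Polynomial

theorem symbPow_fiberProduct_eq_inf_general
    (k : Type*) [Field k] (a b : ℕ)
    (I : Ideal (MvPolynomial (Fin a) k)) (hIm : I ≤ mxI k (Fin a) ^ 2)
    (J : Ideal (MvPolynomial (Fin b) k)) (hJn : J ≤ mxI k (Fin b) ^ 2)
    -- `depth(R/I) ≥ 1` and `depth(S/J) ≥ 1`, equivalently the graded maximal ideals are
    -- not associated primes of `R/I` and `S/J` respectively
    (hdepthI : mxI k (Fin a) ∉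
      associatedPrimes (MvPolynomial (Fin a) k) (MvPolynomial (Fin a) k ⧸ I))
    (hdepthJ : mxI k (Fin b) ∉
      associatedPrimes (MvPolynomial (Fin b) k) (MvPolynomial (Fin b) k ⧸ J))
    (I' J' m' n' : Ideal (MvPolynomial (Fin a ⊕ Fin b) k))
    (hI' : I' = Ideal.map (rename (Sum.inl : Fin a → Fin a ⊕ Fin b) :
      MvPolynomial (Fin a) k →ₐ[k] MvPolynomial (Fin a ⊕ Fin b) k) I)
    (hJ' : J' = Ideal.map (rename (Sum.inr : Fin b → Fin a ⊕ Fin b) :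
      MvPolynomial (Fin b) k →ₐ[k] MvPolynomial (Fin a ⊕ Fin b) k) J)
    (hm' : m' = Ideal.map (rename (Sum.inl : Fin a → Fin a ⊕ Fin b) :
      MvPolynomial (Fin a) k →ₐ[k] MvPolynomial (Fin a ⊕ Fin b) k) (mxI k (Fin a)))
    (hn' : n' = Ideal.map (rename (Sum.inr : Fin b → Fin a ⊕ Fin b) :
      MvPolynomial (Fin b) k →ₐ[k] MvPolynomial (Fin a ⊕ Fin b) k) (mxI k (Fin b)))
    (F : Ideal (MvPolynomial (Fin a ⊕ Fin b) k)) (hF : F = I' + J' + m' * n')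
    (s : ℕ) :
    symbPow F s = symbPow (I' + n') s ⊓ symbPow (J' + m') s := by
  rw [map_rename_mxI] at hm' hn'
  have hI'm' : I' ≤ m' := by
    rw [hI', hm', ← map_rename_mxI]
    exact Ideal.map_mono (hIm.trans (Ideal.pow_le_self two_ne_zero))
  have hJ'n' : J' ≤ n' := by
    rw [hJ', hn', ← map_rename_mxI]
    exact Ideal.map_mono (hJn.trans (Ideal.pow_le_self two_ne_zero))
  have hmn : m' * n' = m' ⊓ n' := by
    refine le_antisymm Ideal.mul_le_inf ?_
    rw [hm', hn', ← Set.compl_range_inl]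
    exact span_X_image_inf_le_mul disjoint_compl_right
  have hsup : (I' ⊔ n') ⊔ (J' ⊔ m') = mxI k (Fin a ⊕ Fin b) := by
    rw [mxI_eq_span_X_sup_span_X_compl (Set.range Sum.inl), Set.compl_range_inl, ← hm', ← hn',
      sup_comm J', sup_sup_sup_comm, sup_eq_right.2 hI'm', sup_eq_left.2 hJ'n']
  have hdepthI' : mxI k (Fin a ⊕ Fin b) ∉ associatedPrimes _ (_ ⧸ I' ⊔ n') := by
    rw [hI', hn', ← Set.compl_range_inl]
    exact mxI_notMem_associatedPrimes_sup_span_X_compl Sum.inl_injective hdepthI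
  have hdepthJ' : mxI k (Fin a ⊕ Fin b) ∉ associatedPrimes _ (_ ⧸ J' ⊔ m') := by
    rw [hJ', hm', ← Set.compl_range_inr]
    exact mxI_notMem_associatedPrimes_sup_span_X_compl Sum.inr_injective hdepthJ
  simp only [hF, Submodule.add_eq_sup, hmn, ← sup_inf_sup_eq_of_le hI'm' hJ'n']
  exact symbPow_inf_eq_inf_symbPow (hsup ▸ mxI_isMaximal) (hsup ▸ hdepthI') (hsup ▸ hdepthJ')
    s

theorem symbPow_fiberProduct_eq_inf
    (k : Type*) [Field k] (a b : ℕ) (ha : 0 < a) (hb : 0 < b)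
    (I : Ideal (MvPolynomial (Fin a) k)) (hIm : I ≤ mxI k (Fin a) ^ 2)
    (hIproper : I ≠ ⊤) (hIhom : IsHomogIdeal I)
    (J : Ideal (MvPolynomial (Fin b) k)) (hJn : J ≤ mxI k (Fin b) ^ 2)
    (hJproper : J ≠ ⊤) (hJhom : IsHomogIdeal J)
    -- `depth(R/I) ≥ 1` and `depth(S/J) ≥ 1`, equivalently the graded maximal ideals are
    -- not associated primes of `R/I` and `S/J` respectively
    (hdepthI : mxI k (Fin a) ∉
      associatedPrimes (MvPolynomial (Fin a) k) (MvPolynomial (Fin a) k ⧸ I))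
    (hdepthJ : mxI k (Fin b) ∉
      associatedPrimes (MvPolynomial (Fin b) k) (MvPolynomial (Fin b) k ⧸ J))
    (I' J' m' n' : Ideal (MvPolynomial (Fin a ⊕ Fin b) k))
    (hI' : I' = Ideal.map (rename (Sum.inl : Fin a → Fin a ⊕ Fin b) :
      MvPolynomial (Fin a) k →ₐ[k] MvPolynomial (Fin a ⊕ Fin b) k) I)
    (hJ' : J' = Ideal.map (rename (Sum.inr : Fin b → Fin a ⊕ Fin b) :
      MvPolynomial (Fin b) k →ₐ[k] MvPolynomial (Fin a ⊕ Fin b) k) J)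
    (hm' : m' = Ideal.map (rename (Sum.inl : Fin a → Fin a ⊕ Fin b) :
      MvPolynomial (Fin a) k →ₐ[k] MvPolynomial (Fin a ⊕ Fin b) k) (mxI k (Fin a)))
    (hn' : n' = Ideal.map (rename (Sum.inr : Fin b → Fin a ⊕ Fin b) :
      MvPolynomial (Fin b) k →ₐ[k] MvPolynomial (Fin a ⊕ Fin b) k) (mxI k (Fin b)))
    (F : Ideal (MvPolynomial (Fin a ⊕ Fin b) k)) (hF : F = I' + J' + m' * n')
    (s : ℕ) (hs : 1 ≤ s) :
    symbPow F s = symbPow (I' + n') s ⊓ symbPow (J' + m') s :=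
  symbPow_fiberProduct_eq_inf_general k a b I hIm J hJn hdepthI hdepthJ I' J' m' n' hI' hJ' hm' hn'
    F hF s

end
end

section
/- Let R be a polynomial ring over a field k with graded maximal ideal m, and let I ⊆ m² be a non-zero proper monomial ideal that is unmixed, i.e., Ass(R/I) = Min(R/I). Then for every integer s ≥ 1, the maximal degree d(I^{(s)}) of a minimal monomial generator of I^{(s)} satisfies d(I^{(s)}) ≥ max{2, d(√I)}·s, where d(√I) is the maximal degree of a minimal monomial generator of the radical √I. -/
/-!
Every minimal prime of a monomial ideal `I` is generated by variables, `P_F = (x_i : i ∈ F)`, and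
`P_F ^ n` consists of the polynomials all of whose monomials have `F`-weight `≥ n`. The lowest
`F`-weight parts of two polynomials multiply without cancellation, so `P_F ^ n` is `P_F`-primary;
hence `I ⊆ P_F ^ n` forces `I^{(s)} ⊆ P_F ^ {ns}`, and (for `I` unmixed) `I^{(s)}` is again a
monomial ideal.

A minimal generator `u` of `√I` is squarefree, and every variable `x_j ∣ u` is the only variable
of `u` lying in some minimal prime `P_F`. A power of `u` lies in `I ^ s ⊆ I^{(s)}`, and a minimal
generator of `I^{(s)}` dividing it has `F`-weight `≥ s`, i.e. exponent `≥ s` at each such `j`, so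
degree `≥ s · deg u`. If instead `d(√I) ≤ 1`, then `√I = P_G` is the only associated prime of
`I`; monomials in the variables outside `G` are then nonzerodivisors modulo `I`, so the `G`-part of
every monomial of `I ⊆ m²` lies in `I` and `I ⊆ P_G ^ 2`, whence `d(I^{(s)}) ≥ 2s`.
-/

open MvPolynomial

noncomputable section

/-- A monomial ideal: an ideal generated by monomials. -/
def IsMonomialIdeal {k : Type*} [Field k] {σ : Type*} (I : Ideal (MvPolynomial σ k)) : Prop :=
  ∃ G : Set (σ →₀ ℕ), I = Ideal.span ((fun d => (monomial d (1 : k) : MvPolynomial σ k)) '' G)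

/-- The maximal degree of a minimal monomial generator of a monomial ideal `I`:
a monomial of `I` is a minimal generator iff it does not lie in `m·I`. -/
def maxGenDeg {k : Type*} [Field k] {σ : Type*} (I : Ideal (MvPolynomial σ k)) : ℕ :=
  sSup {n : ℕ | ∃ d : σ →₀ ℕ, (monomial d (1 : k) : MvPolynomial σ k) ∈ I ∧
    (monomial d (1 : k) : MvPolynomial σ k) ∉ mxI k σ * I ∧ n = d.sum fun _ e => e}

open scoped Pointwise

section MonomialIdeal

variable {σ k : Type*} [Field k] {J K A : Ideal (MvPolynomial σ k)} {d e : σ →₀ ℕ}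

lemma monomial_one_mem_of_le (hd : monomial d (1 : k) ∈ J) (hde : d ≤ e) :
    monomial e (1 : k) ∈ J :=
  J.mem_of_dvd (monomial_dvd_monomial.2 ⟨Or.inr hde, dvd_rfl⟩) hd

lemma mem_support_monomial_one (d : σ →₀ ℕ) : d ∈ (monomial d (1 : k)).support := by
  classical simp [coeff_monomial]

lemma mem_of_forall_monomial_one_mem {p : MvPolynomial σ k}
    (h : ∀ d ∈ p.support, monomial d (1 : k) ∈ J) : p ∈ J := by
  rw [p.as_sum]
  refine J.sum_mem fun d hd => ?_
  rw [← mul_one (coeff d p), ← C_mul_monomial]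
  exact J.mul_mem_left _ (h d hd)

lemma isMonomialIdeal_iff :
    IsMonomialIdeal J ↔ ∀ p ∈ J, ∀ d ∈ p.support, monomial d (1 : k) ∈ J := by
  constructor
  · rintro ⟨G, rfl⟩ p hp d hd
    obtain ⟨g, hg, hgd⟩ := mem_ideal_span_monomial_image.1 hp d hd
    exact monomial_one_mem_of_le (Ideal.subset_span ⟨g, hg, rfl⟩) hgd
  · refine fun h => ⟨{d | monomial d (1 : k) ∈ J}, le_antisymm (fun p hp => ?_) ?_⟩
    · exact mem_of_forall_monomial_one_mem fun d hd => Ideal.subset_span ⟨d, h p hp d hd, rfl⟩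
    · exact Ideal.span_le.2 (by rintro _ ⟨d, hd, rfl⟩; exact hd)

lemma IsMonomialIdeal.monomial_one_mem (hJ : IsMonomialIdeal J) {p : MvPolynomial σ k}
    (hp : p ∈ J) (hd : d ∈ p.support) : monomial d (1 : k) ∈ J :=
  isMonomialIdeal_iff.1 hJ p hp d hd

lemma IsMonomialIdeal.le_iff (hJ : IsMonomialIdeal J) :
    J ≤ K ↔ ∀ d, monomial d (1 : k) ∈ J → monomial d (1 : k) ∈ K :=
  ⟨fun h _ hd => h hd, fun h _ hp =>
    mem_of_forall_monomial_one_mem fun d hd => h d (hJ.monomial_one_mem hp hd)⟩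

lemma isMonomialIdeal_sInf {S : Set (Ideal (MvPolynomial σ k))}
    (hS : ∀ J ∈ S, IsMonomialIdeal J) : IsMonomialIdeal (sInf S) :=
  isMonomialIdeal_iff.2 fun _ hp _ hd => Submodule.mem_sInf.2 fun J hJ =>
    (hS J hJ).monomial_one_mem (Submodule.mem_sInf.1 hp J hJ) hd

lemma span_monomial_mul_span_monomial (G H : Set (σ →₀ ℕ)) :
    Ideal.span ((fun d => monomial d (1 : k)) '' G) *
        Ideal.span ((fun d => monomial d (1 : k)) '' H) =
      Ideal.span ((fun d => monomial d (1 : k)) '' (G + H)) := by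
  rw [Ideal.span_mul_span']
  congr 1
  ext p
  simp only [Set.mem_mul, Set.mem_image, Set.mem_add]
  constructor
  · rintro ⟨_, ⟨g, hg, rfl⟩, _, ⟨h, hh, rfl⟩, rfl⟩
    exact ⟨g + h, ⟨g, hg, h, hh, rfl⟩, by rw [monomial_mul, one_mul]⟩
  · rintro ⟨_, ⟨g, hg, h, hh, rfl⟩, rfl⟩
    exact ⟨_, ⟨g, hg, rfl⟩, _, ⟨h, hh, rfl⟩, by rw [monomial_mul, one_mul]⟩

lemma IsMonomialIdeal.mul (hJ : IsMonomialIdeal J) (hK : IsMonomialIdeal K) :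
    IsMonomialIdeal (J * K) := by
  obtain ⟨G, rfl⟩ := hJ
  obtain ⟨H, rfl⟩ := hK
  exact ⟨G + H, span_monomial_mul_span_monomial G H⟩

lemma IsMonomialIdeal.pow (hJ : IsMonomialIdeal J) (n : ℕ) : IsMonomialIdeal (J ^ n) := by
  induction n with
  | zero => exact isMonomialIdeal_iff.2 fun _ _ _ _ => by simp
  | succ n ih => rw [pow_succ]; exact ih.mul hJ

lemma mxI_eq_span_monomial :
    mxI k σ = Ideal.span ((fun d => monomial d (1 : k)) '' Set.range (Finsupp.single · 1)) := by
  rw [mxI, ← Set.range_comp]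
  rfl

lemma monomial_one_mem_mxI_mul_of_lt (he : monomial e (1 : k) ∈ A) (hed : e < d) :
    monomial d (1 : k) ∈ mxI k σ * A := by
  obtain ⟨hle, i, hi⟩ := Finsupp.lt_def.1 hed
  have hid : Finsupp.single i 1 ≤ d := Finsupp.single_le_iff.2 (by omega)
  have hd : monomial d (1 : k) = X i * monomial (d - Finsupp.single i 1) 1 := by
    rw [X, monomial_mul, one_mul, add_tsub_cancel_of_le hid]
  rw [hd]
  refine Ideal.mul_mem_mul (Ideal.subset_span ⟨i, rfl⟩) (monomial_one_mem_of_le he fun j => ?_)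
  rcases eq_or_ne j i with rfl | hj
  · simp only [Finsupp.tsub_apply, Finsupp.single_eq_same]
    omega
  · simpa [Finsupp.single_apply, hj.symm] using hle j

lemma IsMonomialIdeal.exists_lt_of_monomial_one_mem_mxI_mul (hA : IsMonomialIdeal A)
    (h : monomial d (1 : k) ∈ mxI k σ * A) : ∃ e < d, monomial e (1 : k) ∈ A := by
  obtain ⟨G, rfl⟩ := hA
  rw [mxI_eq_span_monomial, span_monomial_mul_span_monomial] at h
  obtain ⟨_, ⟨_, ⟨i, rfl⟩, g, hg, rfl⟩, hle⟩ :=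
    mem_ideal_span_monomial_image.1 h d (mem_support_monomial_one d)
  refine ⟨g, lt_of_lt_of_le ?_ hle, Ideal.subset_span ⟨g, hg, rfl⟩⟩
  exact lt_add_of_pos_left g (pos_iff_ne_zero.2 (by simp))

end MonomialIdeal

section MinimalGenerators

variable {σ k : Type*} [Field k] {A : Ideal (MvPolynomial σ k)} {d : σ →₀ ℕ}

def IsMinimalMonomialGen (A : Ideal (MvPolynomial σ k)) (d : σ →₀ ℕ) : Prop :=
  monomial d (1 : k) ∈ A ∧ monomial d (1 : k) ∉ mxI k σ * A

lemma isAntichain_setOf_isMinimalMonomialGen (A : Ideal (MvPolynomial σ k)) :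
    IsAntichain (· ≤ ·) {d | IsMinimalMonomialGen A d} :=
  fun _ hd _ he hne hle => he.2 (monomial_one_mem_mxI_mul_of_lt hd.1 (lt_of_le_of_ne hle hne))

lemma maxGenDeg_eq_sSup (A : Ideal (MvPolynomial σ k)) :
    maxGenDeg A = sSup (Finsupp.degree '' {d | IsMinimalMonomialGen A d}) := by
  unfold maxGenDeg
  congr 1
  ext n
  exact ⟨fun ⟨d, h1, h2, hn⟩ => ⟨d, ⟨h1, h2⟩, hn.symm⟩,
    fun ⟨d, ⟨h1, h2⟩, hn⟩ => ⟨d, h1, h2, hn.symm⟩⟩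

lemma bddAbove_degree_isMinimalMonomialGen [Finite σ] (A : Ideal (MvPolynomial σ k)) :
    BddAbove (Finsupp.degree '' {d | IsMinimalMonomialGen A d}) :=
  (((isAntichain_setOf_isMinimalMonomialGen A).finite_of_partiallyWellOrderedOn
    (Set.isPWO_of_wellQuasiOrderedLE _)).image _).bddAbove

lemma IsMinimalMonomialGen.degree_le_maxGenDeg [Finite σ] (hd : IsMinimalMonomialGen A d) :
    d.degree ≤ maxGenDeg A := by
  rw [maxGenDeg_eq_sSup]
  exact le_csSup (bddAbove_degree_isMinimalMonomialGen A) ⟨d, hd, rfl⟩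

lemma exists_isMinimalMonomialGen_degree_eq_maxGenDeg [Finite σ] (h : maxGenDeg A ≠ 0) :
    ∃ d, IsMinimalMonomialGen A d ∧ d.degree = maxGenDeg A := by
  rw [maxGenDeg_eq_sSup] at h ⊢
  refine Nat.sSup_mem ?_ (bddAbove_degree_isMinimalMonomialGen A)
  by_contra hempty
  simp [Set.not_nonempty_iff_eq_empty.1 hempty] at h

lemma IsMonomialIdeal.exists_isMinimalMonomialGen_le (hA : IsMonomialIdeal A) {w : σ →₀ ℕ}
    (hw : monomial w (1 : k) ∈ A) : ∃ d ≤ w, IsMinimalMonomialGen A d := by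
  obtain ⟨d, hdw, hmin⟩ := exists_minimal_le_of_wellFoundedLT (monomial · (1 : k) ∈ A) w hw
  refine ⟨d, hdw, hmin.prop, fun h => ?_⟩
  obtain ⟨e, hed, he⟩ := hA.exists_lt_of_monomial_one_mem_mxI_mul h
  exact hed.not_ge (hmin.2 he hed.le)

end MinimalGenerators

section WeightIdeal

variable {σ : Type*} (R : Type*) [CommRing R] (w : σ → ℕ)

/-- For `w` the indicator of a set `F` of variables this is `(x_i : i ∈ F) ^ n`. -/
def weightIdeal (n : ℕ) : Ideal (MvPolynomial σ R) :=
  Ideal.span ((fun d => monomial d (1 : R)) '' {d | n ≤ Finsupp.weight w d})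

lemma isMonomialIdeal_weightIdeal (k : Type*) [Field k] (n : ℕ) :
    IsMonomialIdeal (weightIdeal k w n) :=
  ⟨_, rfl⟩

variable {R w}

lemma Finsupp.weight_mono : Monotone (Finsupp.weight w : (σ →₀ ℕ) → ℕ) := fun d e h => by
  obtain ⟨c, rfl⟩ := exists_add_of_le h
  simp

lemma mem_weightIdeal_iff {n : ℕ} {p : MvPolynomial σ R} :
    p ∈ weightIdeal R w n ↔ ∀ d ∈ p.support, n ≤ Finsupp.weight w d := by
  rw [weightIdeal, mem_ideal_span_monomial_image]
  exact forall₂_congr fun d _ =>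
    ⟨fun ⟨_, he, hed⟩ => he.trans (Finsupp.weight_mono hed), fun h => ⟨d, h, le_rfl⟩⟩

lemma monomial_one_mem_weightIdeal_iff [Nontrivial R] {n : ℕ} {d : σ →₀ ℕ} :
    monomial d (1 : R) ∈ weightIdeal R w n ↔ n ≤ Finsupp.weight w d := by
  classical
  rw [mem_weightIdeal_iff, support_monomial, if_neg one_ne_zero]
  simp

lemma mem_weightIdeal_iff_le_weightedOrder {n : ℕ} {p : MvPolynomial σ R} :
    p ∈ weightIdeal R w n ↔ n ≤ (p : MvPowerSeries σ R).weightedOrder w := by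
  rw [mem_weightIdeal_iff]
  constructor
  · refine fun h => MvPowerSeries.le_weightedOrder w fun d hd => ?_
    rw [coeff_coe, ← notMem_support_iff]
    exact fun hd' => (h d hd').not_gt (by exact_mod_cast hd)
  · refine fun h d hd => ?_
    have := MvPowerSeries.weightedOrder_le w (f := (p : MvPowerSeries σ R)) (d := d)
      (by rwa [coeff_coe, ← mem_support_iff])
    exact_mod_cast h.trans this

lemma weightIdeal_zero : weightIdeal R w 0 = ⊤ :=
  (Ideal.eq_top_iff_one _).2 (mem_weightIdeal_iff.2 fun _ _ => Nat.zero_le _)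

lemma weightIdeal_mul_le (m n : ℕ) :
    weightIdeal R w m * weightIdeal R w n ≤ weightIdeal R w (m + n) := by
  refine Ideal.mul_le.2 fun p hp q hq => ?_
  rw [mem_weightIdeal_iff_le_weightedOrder] at hp hq ⊢
  rw [coe_mul, Nat.cast_add]
  exact (add_le_add hp hq).trans (MvPowerSeries.le_weightedOrder_mul w)

lemma weightIdeal_pow_le (n s : ℕ) : weightIdeal R w n ^ s ≤ weightIdeal R w (n * s) := by
  induction s with
  | zero => simp [weightIdeal_zero]
  | succ s ih =>
    rw [pow_succ, mul_add_one]
    exact (Ideal.mul_mono_left ih).trans (weightIdeal_mul_le _ _)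

lemma weightedOrder_eq_zero_of_notMem_weightIdeal {t : MvPolynomial σ R}
    (ht : t ∉ weightIdeal R w 1) : (t : MvPowerSeries σ R).weightedOrder w = 0 := by
  rw [mem_weightIdeal_iff_le_weightedOrder, Nat.cast_one, Order.one_le_iff_ne_zero] at ht
  exact not_not.1 ht

variable [IsDomain R]

lemma mem_weightIdeal_of_mul_mem {n : ℕ} {t r : MvPolynomial σ R} (ht : t ∉ weightIdeal R w 1)
    (h : t * r ∈ weightIdeal R w n) : r ∈ weightIdeal R w n := by
  rw [mem_weightIdeal_iff_le_weightedOrder, coe_mul, MvPowerSeries.weightedOrder_mul,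
    weightedOrder_eq_zero_of_notMem_weightIdeal ht, zero_add] at h
  exact mem_weightIdeal_iff_le_weightedOrder.2 h

lemma weightIdeal_one_isPrime : (weightIdeal R w 1).IsPrime := by
  refine ⟨fun h => ?_, fun hpq =>
    or_iff_not_imp_left.2 fun hp => mem_weightIdeal_of_mul_mem hp hpq⟩
  have h1 : monomial (0 : σ →₀ ℕ) (1 : R) ∈ weightIdeal R w 1 := h ▸ Submodule.mem_top
  rw [monomial_one_mem_weightIdeal_iff, map_zero] at h1
  exact Nat.not_succ_le_zero 0 h1

/-- Lowest-weight parts multiply without cancellation (`MvPowerSeries.weightedOrder_mul`). -/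
lemma exists_add_mem_support_mul {t r : MvPolynomial σ R} (ht : t ∉ weightIdeal R w 1)
    (hr : r ≠ 0) :
    ∃ d ∈ r.support, ∃ e, Finsupp.weight w e = 0 ∧ e + d ∈ (t * r).support := by
  classical
  have htr : (↑(t * r) : MvPowerSeries σ R).weightedOrder w =
      (r : MvPowerSeries σ R).weightedOrder w := by
    rw [coe_mul, MvPowerSeries.weightedOrder_mul, weightedOrder_eq_zero_of_notMem_weightIdeal ht,
      zero_add]
  have ht0 : t ≠ 0 := by rintro rfl; exact ht (Ideal.zero_mem _)
  obtain ⟨D, hD, hDw⟩ := MvPowerSeries.exists_coeff_ne_zero_and_weightedOrder w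
    ((MvPowerSeries.ne_zero_iff_weightedOrder_finite w).1
      ((coe_eq_zero_iff).not.2 (mul_ne_zero ht0 hr)))
  rw [coeff_coe, ← mem_support_iff] at hD
  obtain ⟨e, he, d, hd, rfl⟩ := Finset.mem_add.1 (support_mul t r hD)
  refine ⟨d, hd, e, ?_, hD⟩
  have hle := MvPowerSeries.weightedOrder_le w (f := (r : MvPowerSeries σ R))
    (by rwa [coeff_coe, ← mem_support_iff])
  rw [← htr, ← hDw, map_add] at hle
  have : Finsupp.weight w e + Finsupp.weight w d ≤ Finsupp.weight w d := by exact_mod_cast hle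
  omega

end WeightIdeal

section VariablePrimes

variable {σ R : Type*} [CommRing R] {F : Set σ} {d : σ →₀ ℕ}

lemma weight_indicator_eq_degree_filter (F : Set σ) [DecidablePred (· ∈ F)]
    (d : σ →₀ ℕ) :
    Finsupp.weight (F.indicator 1) d = (d.filter (· ∈ F)).degree := by
  simp +contextual [Finsupp.weight_apply, Finsupp.degree_apply, Finsupp.sum, Finset.sum_filter,
    Set.indicator_apply, Finsupp.filter_apply]

lemma weight_indicator_le_degree (F : Set σ) (d : σ →₀ ℕ) :
    Finsupp.weight (F.indicator 1) d ≤ d.degree := by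
  classical
  rw [weight_indicator_eq_degree_filter]
  exact Finsupp.degree_mono fun i => by
    rw [Finsupp.filter_apply]
    split_ifs <;> simp

lemma one_le_weight_indicator_iff :
    1 ≤ Finsupp.weight (F.indicator 1) d ↔ ∃ i ∈ F, d i ≠ 0 := by
  classical
  simp [weight_indicator_eq_degree_filter, Nat.one_le_iff_ne_zero, Finsupp.degree_eq_zero_iff,
    Finsupp.ext_iff, Finsupp.filter_apply]

lemma monomial_one_mem_weightIdeal_indicator_iff [Nontrivial R] :
    monomial d (1 : R) ∈ weightIdeal R (F.indicator 1) 1 ↔ ∃ i ∈ F, d i ≠ 0 := by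
  rw [monomial_one_mem_weightIdeal_iff, one_le_weight_indicator_iff]

lemma weightIdeal_indicator_le {P : Ideal (MvPolynomial σ R)} (hF : ∀ i ∈ F, X i ∈ P) :
    weightIdeal R (F.indicator 1) 1 ≤ P := by
  refine Ideal.span_le.2 ?_
  rintro _ ⟨d, hd, rfl⟩
  obtain ⟨i, hiF, hi⟩ := one_le_weight_indicator_iff.1 hd
  exact P.mem_of_dvd (X_dvd_monomial.2 (Or.inr hi)) (hF i hiF)

lemma Ideal.IsPrime.exists_X_mem_of_monomial_one_mem {P : Ideal (MvPolynomial σ R)}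
    (hP : P.IsPrime) (h : monomial d (1 : R) ∈ P) : ∃ i, d i ≠ 0 ∧ X i ∈ P := by
  rw [monomial_eq, C_1, one_mul, Finsupp.prod] at h
  obtain ⟨i, hi, hXi⟩ := hP.prod_mem_iff.1 h
  exact ⟨i, Finsupp.mem_support_iff.1 hi, hP.mem_of_pow_mem _ hXi⟩

variable {k : Type*} [Field k] {I P : Ideal (MvPolynomial σ k)}

lemma IsMonomialIdeal.exists_eq_weightIdeal_of_mem_minimalPrimes (hI : IsMonomialIdeal I)
    (hP : P ∈ I.minimalPrimes) : ∃ F : Set σ, P = weightIdeal k (F.indicator 1) 1 := by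
  have hle : weightIdeal k ({i | X i ∈ P}.indicator 1) 1 ≤ P :=
    weightIdeal_indicator_le fun _ hi => hi
  refine ⟨_, le_antisymm (hP.2 ⟨weightIdeal_one_isPrime, hI.le_iff.2 fun d hd => ?_⟩ hle)
    hle⟩
  obtain ⟨i, hdi, hXi⟩ := hP.1.1.exists_X_mem_of_monomial_one_mem (hP.1.2 hd)
  exact monomial_one_mem_weightIdeal_indicator_iff.2 ⟨i, hXi, hdi⟩

lemma IsMonomialIdeal.radical (hI : IsMonomialIdeal I) : IsMonomialIdeal I.radical := by
  rw [← Ideal.sInf_minimalPrimes]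
  refine isMonomialIdeal_sInf fun P hP => ?_
  obtain ⟨F, rfl⟩ := hI.exists_eq_weightIdeal_of_mem_minimalPrimes hP
  exact isMonomialIdeal_weightIdeal _ k 1

lemma mxI_pow_two_le_weightIdeal : mxI k σ ^ 2 ≤ weightIdeal k 1 2 := by
  have hm : mxI k σ ≤ weightIdeal k 1 1 := Ideal.span_le.2 fun _ ⟨i, hi⟩ => by
    rw [← hi, SetLike.mem_coe, X, monomial_one_mem_weightIdeal_iff, Finsupp.weight_single]
    rfl
  exact (Ideal.pow_right_mono hm 2).trans (weightIdeal_pow_le 1 2)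

end VariablePrimes

section SymbolicPower

variable {σ : Type*}

lemma mem_of_mul_mem_of_associatedPrimes_eq_singleton {A : Type*} [CommRing A]
    [IsNoetherianRing A] {I P : Ideal A} (hass : associatedPrimes A (A ⧸ I) = {P}) {t r : A}
    (ht : t ∉ P) (h : t * r ∈ I) : r ∈ I := by
  by_contra hr
  have htP : t ∈ ⋃ p ∈ associatedPrimes A (A ⧸ I), (p : Set A) := by
    rw [biUnion_associatedPrimes_eq_zero_divisors]
    refine ⟨Ideal.Quotient.mk I r, by rwa [ne_eq, Ideal.Quotient.eq_zero_iff_mem], ?_⟩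
    rwa [Algebra.smul_def, Ideal.Quotient.algebraMap_eq, ← map_mul,
      Ideal.Quotient.eq_zero_iff_mem]
  simp [hass] at htP
  exact ht htP

lemma pow_le_symbPow {A : Type*} [CommRing A] (I : Ideal A) (s : ℕ) : I ^ s ≤ symbPow I s :=
  le_sInf fun _ ⟨_, _, hJ⟩ => hJ ▸ Ideal.le_comap_map

lemma mem_symbPow_iff_of_associatedPrimes_eq_minimalPrimes {A : Type*} [CommRing A]
    {I : Ideal A} (hunm : associatedPrimes A (A ⧸ I) = I.minimalPrimes) {s : ℕ} {r : A} :
    r ∈ symbPow I s ↔ ∀ P ∈ I.minimalPrimes, ∃ t ∉ P, t * r ∈ I ^ s := by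
  simp only [symbPow, Submodule.mem_sInf]
  refine ⟨fun h P hP => ?_, ?_⟩
  · have := hP.1.1
    exact (IsLocalization.algebraMap_mem_map_algebraMap_iff P.primeCompl
      (Localization.AtPrime P) _ r).1 (h _ ⟨P, hunm ▸ hP, rfl⟩)
  · rintro h _ ⟨P, hP, rfl⟩
    have := hP.isPrime
    exact (IsLocalization.algebraMap_mem_map_algebraMap_iff P.primeCompl
      (Localization.AtPrime P) _ r).2 (h P (hunm ▸ hP))

lemma IsMonomialIdeal.exists_weight_eq_zero_of_mul_mem {k : Type*} [Field k]
    {N : Ideal (MvPolynomial σ k)} (hN : IsMonomialIdeal N) {w : σ → ℕ}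
    {t r : MvPolynomial σ k}
    (ht : t ∉ weightIdeal k w 1) (h : t * r ∈ N) {d : σ →₀ ℕ} (hd : d ∈ r.support) :
    ∃ e, Finsupp.weight w e = 0 ∧ monomial (d + e) (1 : k) ∈ N := by
  classical
  -- `S` saturates `N` by the monomials of weight zero; the part `r₂` of `r` outside `S` must
  -- vanish, since otherwise `exists_add_mem_support_mul` yields a monomial of `r₂` inside `S`.
  set S : Ideal (MvPolynomial σ k) := Ideal.span ((fun d => monomial d (1 : k)) ''
    {d | ∃ e, Finsupp.weight w e = 0 ∧ monomial (d + e) (1 : k) ∈ N})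
  have hS : IsMonomialIdeal S := ⟨_, rfl⟩
  have mem_S (d : σ →₀ ℕ) : monomial d (1 : k) ∈ S ↔
      ∃ e, Finsupp.weight w e = 0 ∧ monomial (d + e) (1 : k) ∈ N := by
    refine ⟨fun h => ?_, fun h => Ideal.subset_span ⟨d, h, rfl⟩⟩
    obtain ⟨g, ⟨e, he, hge⟩, hgd⟩ :=
      mem_ideal_span_monomial_image.1 h d (mem_support_monomial_one d)
    exact ⟨e, he, monomial_one_mem_of_le hge (add_le_add_left hgd e)⟩
  have hNS : N ≤ S := hN.le_iff.2 fun d hd => (mem_S d).2 ⟨0, map_zero _, by rwa [add_zero]⟩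
  suffices r ∈ S from (mem_S d).1 (hS.monomial_one_mem this hd)
  set r₁ := ∑ d ∈ r.support with monomial d (1 : k) ∈ S, monomial d (coeff d r)
  set r₂ := ∑ d ∈ r.support with monomial d (1 : k) ∉ S, monomial d (coeff d r)
  have hr : r₁ + r₂ = r := (Finset.sum_filter_add_sum_filter_not _ _ _).trans r.as_sum.symm
  have hr₁ : r₁ ∈ S := S.sum_mem fun d hd => by
    rw [← mul_one (coeff d r), ← C_mul_monomial]
    exact S.mul_mem_left _ (Finset.mem_filter.1 hd).2
  have hsupp : r₂.support ⊆ {d ∈ r.support | monomial d (1 : k) ∉ S} :=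
    support_sum.trans (Finset.biUnion_subset.2 fun _ hd =>
      support_monomial_subset.trans (Finset.singleton_subset_iff.2 hd))
  suffices r₂ = 0 by rw [← hr, this, add_zero]; exact hr₁
  by_contra hr₂
  have htr₂ : t * r₂ ∈ S := by
    rw [show t * r₂ = t * r - t * r₁ by rw [← hr]; ring]
    exact S.sub_mem (hNS h) (S.mul_mem_left t hr₁)
  obtain ⟨d, hd, e, he, hed⟩ := exists_add_mem_support_mul ht hr₂
  obtain ⟨g, hg, hedg⟩ := (mem_S _).1 (hS.monomial_one_mem htr₂ hed)
  refine (Finset.mem_filter.1 (hsupp hd)).2 ((mem_S d).2 ⟨e + g, ?_, ?_⟩)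
  · rw [map_add, he, hg]
  · rwa [← add_assoc, add_comm d e]

lemma isMonomialIdeal_symbPow {k : Type*} [Field k] {I : Ideal (MvPolynomial σ k)}
    (hI : IsMonomialIdeal I) (hunm : associatedPrimes _ (MvPolynomial σ k ⧸ I) = I.minimalPrimes)
    (s : ℕ) : IsMonomialIdeal (symbPow I s) := by
  refine isMonomialIdeal_iff.2 fun p hp d hd =>
    (mem_symbPow_iff_of_associatedPrimes_eq_minimalPrimes hunm).2 fun P hP => ?_
  obtain ⟨t, ht, htp⟩ := (mem_symbPow_iff_of_associatedPrimes_eq_minimalPrimes hunm).1 hp P hP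
  obtain ⟨F, rfl⟩ := hI.exists_eq_weightIdeal_of_mem_minimalPrimes hP
  obtain ⟨e, he, hde⟩ := (hI.pow s).exists_weight_eq_zero_of_mul_mem ht htp hd
  refine ⟨monomial e 1, ?_, by rwa [monomial_mul, one_mul, add_comm]⟩
  rw [monomial_one_mem_weightIdeal_iff, he]
  exact Nat.not_succ_le_zero 0

lemma symbPow_le_weightIdeal {R : Type*} [CommRing R] [IsDomain R] {I : Ideal (MvPolynomial σ R)}
    (hunm : associatedPrimes _ (MvPolynomial σ R ⧸ I) = I.minimalPrimes) {w : σ → ℕ}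
    (hw : weightIdeal R w 1 ∈ I.minimalPrimes) {n : ℕ} (hIw : I ≤ weightIdeal R w n)
    (s : ℕ) :
    symbPow I s ≤ weightIdeal R w (n * s) := fun r hr => by
  obtain ⟨t, ht, htr⟩ := (mem_symbPow_iff_of_associatedPrimes_eq_minimalPrimes hunm).1 hr _ hw
  exact mem_weightIdeal_of_mul_mem ht (weightIdeal_pow_le n s (Ideal.pow_right_mono hIw s htr))

end SymbolicPower

section Bounds

variable {σ k : Type*} [Field k] {I : Ideal (MvPolynomial σ k)} {u : σ →₀ ℕ}

/-- Dividing `x ^ u` by `x_j` leaves `√I`, so some minimal prime `P_F` misses `x ^ u / x_j`;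
as it contains `x ^ u`, `x_j` is the only variable of `x ^ u` in `P_F`. -/
lemma IsMonomialIdeal.exists_minimalPrime_of_isMinimalMonomialGen_radical
    (hI : IsMonomialIdeal I) (hu : IsMinimalMonomialGen I.radical u) {j : σ} (hj : u j ≠ 0) :
    ∃ F : Set σ, weightIdeal k (F.indicator 1) 1 ∈ I.minimalPrimes ∧ j ∈ F ∧ u j = 1 ∧
      ∀ i ∈ F, i ≠ j → u i = 0 := by
  have hlt : u - Finsupp.single j 1 < u :=
    Finsupp.lt_def.2 ⟨tsub_le_self, j, by
      simp only [Finsupp.tsub_apply, Finsupp.single_eq_same]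
      omega⟩
  have hnot : monomial (u - Finsupp.single j 1) (1 : k) ∉ I.radical :=
    fun h => hu.2 (monomial_one_mem_mxI_mul_of_lt h hlt)
  rw [← Ideal.sInf_minimalPrimes, Submodule.mem_sInf] at hnot
  push Not at hnot
  obtain ⟨P, hP, huP⟩ := hnot
  have hu' : monomial u (1 : k) ∈ P := (Ideal.radical_mono hP.1.2).trans hP.1.1.radical.le hu.1
  obtain ⟨F, rfl⟩ := hI.exists_eq_weightIdeal_of_mem_minimalPrimes hP
  rw [monomial_one_mem_weightIdeal_indicator_iff] at huP hu'
  push Not at huP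
  obtain ⟨i, hiF, hi⟩ := hu'
  have hij : i = j := by
    by_contra hij
    simpa [Finsupp.single_apply, Ne.symm hij, hi] using huP i hiF
  subst hij
  refine ⟨F, hP, hiF, ?_, fun i' hi' hne => ?_⟩
  · have := huP i hiF
    simp only [Finsupp.tsub_apply, Finsupp.single_eq_same] at this
    omega
  · simpa [Finsupp.single_apply, Ne.symm hne] using huP i' hi'

lemma IsMonomialIdeal.mul_le_apply_of_isMinimalMonomialGen_radical (hI : IsMonomialIdeal I)
    (hunm : associatedPrimes _ (MvPolynomial σ k ⧸ I) = I.minimalPrimes)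
    (hu : IsMinimalMonomialGen I.radical u) {s : ℕ} {v : σ →₀ ℕ}
    (hv : monomial v (1 : k) ∈ symbPow I s) (hvu : v.support ⊆ u.support) (j : σ) :
    u j * s ≤ v j := by
  rcases eq_or_ne (u j) 0 with hj | hj
  · simp [hj]
  obtain ⟨F, hF, hjF, huj, hFu⟩ := hI.exists_minimalPrime_of_isMinimalMonomialGen_radical hu hj
  have hsv := monomial_one_mem_weightIdeal_iff.1 (symbPow_le_weightIdeal hunm hF hF.1.2 s hv)
  have hvF : Finsupp.weight (F.indicator 1) v ≤ v j := by
    rw [Finsupp.weight_apply, Finsupp.sum]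
    refine (Finset.sum_eq_single j (fun i _ hij => ?_) (fun hj' => ?_)).trans_le ?_
    · by_cases hiF : i ∈ F
      · have : v i = 0 := Finsupp.notMem_support_iff.1 fun hi =>
          Finsupp.mem_support_iff.1 (hvu hi) (hFu i hiF hij)
        simp [this]
      · simp [hiF]
    · simp [Finsupp.notMem_support_iff.1 hj']
    · simp [hjF]
  rw [huj, one_mul]
  omega

theorem IsMonomialIdeal.maxGenDeg_radical_mul_le_maxGenDeg_symbPow [Fintype σ]
    (hI : IsMonomialIdeal I) (hunm : associatedPrimes _ (MvPolynomial σ k ⧸ I) = I.minimalPrimes)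
    (s : ℕ) : maxGenDeg I.radical * s ≤ maxGenDeg (symbPow I s) := by
  rcases eq_or_ne (maxGenDeg I.radical) 0 with h0 | h0
  · simp [h0]
  obtain ⟨u, hu, hdeg⟩ := exists_isMinimalMonomialGen_degree_eq_maxGenDeg h0
  obtain ⟨n, hn⟩ := hu.1
  have hw : monomial (s • n • u) (1 : k) ∈ symbPow I s := by
    apply pow_le_symbPow
    simpa [monomial_pow] using Ideal.pow_mem_pow hn s
  obtain ⟨v, hvw, hv⟩ := (isMonomialIdeal_symbPow hI hunm s).exists_isMinimalMonomialGen_le hw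
  have hvu : v.support ⊆ u.support := fun i hi => Finsupp.mem_support_iff.2 fun hui =>
    Finsupp.mem_support_iff.1 hi (by simpa [hui] using hvw i)
  calc maxGenDeg I.radical * s = ∑ j, u j * s := by
        rw [← hdeg, Finsupp.degree_eq_sum, Finset.sum_mul]
    _ ≤ ∑ j, v j := Finset.sum_le_sum fun j _ =>
      hI.mul_le_apply_of_isMinimalMonomialGen_radical hunm hu hv.1 hvu j
    _ = v.degree := (Finsupp.degree_eq_sum v).symm
    _ ≤ maxGenDeg (symbPow I s) := hv.degree_le_maxGenDeg

/-- Monomials in the variables outside `G` avoid the only associated prime, so they are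
nonzerodivisors modulo `I`; hence the `G`-part of a monomial of `I` lies in `I ⊆ m²`. -/
lemma IsMonomialIdeal.le_weightIdeal_two [Finite σ] (hI : IsMonomialIdeal I) {G : Set σ}
    (hass : associatedPrimes _ (MvPolynomial σ k ⧸ I) = {weightIdeal k (G.indicator 1) 1})
    (hIm : I ≤ mxI k σ ^ 2) : I ≤ weightIdeal k (G.indicator 1) 2 := by
  classical
  refine hI.le_iff.2 fun d hd => ?_
  have hout : monomial (d.filter (· ∉ G)) (1 : k) ∉ weightIdeal k (G.indicator 1) 1 := by
    simp +contextual [monomial_one_mem_weightIdeal_indicator_iff, Finsupp.filter_apply]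
  have hin : monomial (d.filter (· ∈ G)) (1 : k) ∈ I := by
    refine mem_of_mul_mem_of_associatedPrimes_eq_singleton hass hout ?_
    rwa [monomial_mul, one_mul, add_comm, Finsupp.filter_add_filter_not]
  have h2 := monomial_one_mem_weightIdeal_iff.1 (mxI_pow_two_le_weightIdeal (hIm hin))
  rwa [monomial_one_mem_weightIdeal_iff, weight_indicator_eq_degree_filter,
    Finsupp.degree_eq_weight_one]

lemma IsMonomialIdeal.radical_eq_weightIdeal_of_maxGenDeg_le_one [Finite σ]
    (hI : IsMonomialIdeal I) (hI1 : I ≠ ⊤) (h : maxGenDeg I.radical ≤ 1) :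
    I.radical = weightIdeal k ({i | X i ∈ I.radical}.indicator 1) 1 := by
  refine le_antisymm (hI.radical.le_iff.2 fun d hd => ?_) (weightIdeal_indicator_le fun _ hi => hi)
  obtain ⟨e, hed, he⟩ := hI.radical.exists_isMinimalMonomialGen_le hd
  have he0 : e.degree ≠ 0 := fun h0 => hI1 <| Ideal.radical_eq_top.1 <|
    (Ideal.eq_top_iff_one _).2 (by simpa [(Finsupp.degree_eq_zero_iff e).1 h0] using he.1)
  obtain ⟨i, rfl⟩ : e ∈ Set.range (Finsupp.single · 1) := by
    rw [Finsupp.range_single_one]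
    exact le_antisymm (he.degree_le_maxGenDeg.trans h) (Nat.one_le_iff_ne_zero.2 he0)
  rw [monomial_one_mem_weightIdeal_indicator_iff]
  exact ⟨i, he.1, Nat.one_le_iff_ne_zero.1 (Finsupp.single_le_iff.1 hed)⟩

theorem IsMonomialIdeal.two_mul_le_maxGenDeg_symbPow [Fintype σ] (hI : IsMonomialIdeal I)
    (hI0 : I ≠ ⊥) (hI1 : I ≠ ⊤) (hIm : I ≤ mxI k σ ^ 2)
    (hunm : associatedPrimes _ (MvPolynomial σ k ⧸ I) = I.minimalPrimes)
    (h : maxGenDeg I.radical ≤ 1) (s : ℕ) : 2 * s ≤ maxGenDeg (symbPow I s) := by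
  set P := weightIdeal k ({i | X i ∈ I.radical}.indicator 1) 1
  have hmin : I.minimalPrimes = {P} := by
    have : P.IsPrime := weightIdeal_one_isPrime
    rw [← Ideal.radical_minimalPrimes, hI.radical_eq_weightIdeal_of_maxGenDeg_le_one hI1 h,
      Ideal.minimalPrimes_eq_subsingleton_self]
  have hsymb := symbPow_le_weightIdeal hunm (hmin ▸ Set.mem_singleton P)
    (hI.le_weightIdeal_two (hunm.trans hmin) hIm) s
  obtain ⟨p, hpI, hp0⟩ := Submodule.exists_mem_ne_zero_of_ne_bot hI0
  obtain ⟨d, hd⟩ := support_nonempty.2 hp0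
  have hw : monomial (s • d) (1 : k) ∈ symbPow I s := by
    apply pow_le_symbPow
    simpa [monomial_pow] using Ideal.pow_mem_pow (hI.monomial_one_mem hpI hd) s
  obtain ⟨v, -, hv⟩ := (isMonomialIdeal_symbPow hI hunm s).exists_isMinimalMonomialGen_le hw
  calc 2 * s ≤ Finsupp.weight ({i | X i ∈ I.radical}.indicator 1) v :=
        monomial_one_mem_weightIdeal_iff.1 (hsymb hv.1)
    _ ≤ v.degree := weight_indicator_le_degree _ v
    _ ≤ maxGenDeg (symbPow I s) := hv.degree_le_maxGenDeg

end Bounds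

theorem maxGenDeg_symbPow_ge_general
    (k : Type*) [Field k] (a : ℕ)
    (I : Ideal (MvPolynomial (Fin a) k)) (hImon : IsMonomialIdeal I)
    (hInz : I ≠ ⊥) (hIproper : I ≠ ⊤) (hIm : I ≤ mxI k (Fin a) ^ 2)
    -- `I` is unmixed
    (hunmixed : associatedPrimes (MvPolynomial (Fin a) k) (MvPolynomial (Fin a) k ⧸ I) =
      I.minimalPrimes)
    (s : ℕ) :
    max 2 (maxGenDeg I.radical) * s ≤ maxGenDeg (symbPow I s) := by
  rcases le_or_gt (maxGenDeg I.radical) 1 with h | h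
  · rw [max_eq_left (by omega)]
    exact hImon.two_mul_le_maxGenDeg_symbPow hInz hIproper hIm hunmixed h s
  · rw [max_eq_right h]
    exact hImon.maxGenDeg_radical_mul_le_maxGenDeg_symbPow hunmixed s

theorem maxGenDeg_symbPow_ge
    (k : Type*) [Field k] (a : ℕ)
    (I : Ideal (MvPolynomial (Fin a) k)) (hImon : IsMonomialIdeal I)
    (hInz : I ≠ ⊥) (hIproper : I ≠ ⊤) (hIm : I ≤ mxI k (Fin a) ^ 2)
    -- `I` is unmixed
    (hunmixed : associatedPrimes (MvPolynomial (Fin a) k) (MvPolynomial (Fin a) k ⧸ I) =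
      I.minimalPrimes)
    (s : ℕ) (hs : 1 ≤ s) :
    max 2 (maxGenDeg I.radical) * s ≤ maxGenDeg (symbPow I s) :=
  maxGenDeg_symbPow_ge_general k a I hImon hInz hIproper hIm hunmixed s

end
end
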